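/- For all positive reals λ, k, μ, the average peak AoI with preemption Δp_WP = 1/λ + 1/k + 1/μ + (1/(λ+μ))(1 + μ/(λ+k)) is strictly less than the average peak AoI without preemption Δp_WOP = 1/λ + 1/k + 2/μ + 1/(λ+k). -/

import Mathlib

theorem one_div_add_mul_one_add_div_lt {a b c : ℝ} (ha : 0 < a) (hb : 0 < b) (hc : 0 < c) :
    1/(a+b) * (1 + b/c) < 1/b + 1/c := by
  have hab : 0 < a + b := add_pos ha hb
  have h_inv : 1/(a+b) < 1/b := one_div_lt_one_div_of_lt hb (lt_add_of_pos_left b ha)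
  have h_frac : b/(a+b) < 1 := (div_lt_one hab).2 (lt_add_of_pos_left b ha)
  calc 1/(a+b) * (1 + b/c) = 1/(a+b) + b/(a+b) * (1/c) := by ring
    _ < 1/b + 1 * (1/c) := add_lt_add h_inv (mul_lt_mul_of_pos_right h_frac (by positivity))
    _ = 1/b + 1/c := by ring

theorem avg_peak_aoi_preemption_lt_no_preemption
    (lam k mu : ℝ) (hlam : 0 < lam) (hk : 0 < k) (hmu : 0 < mu) :
    1/lam + 1/k + 1/mu + (1/(lam+mu)) * (1 + mu/(lam+k))
    < 1/lam + 1/k + 2/mu + 1/(lam+k) := by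
  have h_term := one_div_add_mul_one_add_div_lt hlam hmu (add_pos hlam hk)
  rw [show (2:ℝ)/mu = 1/mu + 1/mu by ring]
  linarith
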